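/- arXiv:1911.05938 — 5 statements merged into one kernel-verified Lean document; each statement's English description precedes it below -/
import Mathlib

section
/- Let α be an irrational real number with 1 < α < 4/3. Then for every positive integer n, ⌊⌊αn⌋·(2/α)⌋ − (2n − 2) equals 1 if {αn} ≤ α/2, and equals 0 otherwise. -/
theorem gp_indicator (α : ℝ) (hα : Irrational α) (h1 : 1 < α) (h2 : α < 4 / 3)
    (n : ℕ) (hn : 0 < n) :
    (Int.fract (α * n) ≤ α / 2 →
      ⌊(⌊α * n⌋ : ℝ) * (2 / α)⌋ - (2 * (n : ℤ) - 2) = 1) ∧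
    (¬ Int.fract (α * n) ≤ α / 2 →
      ⌊(⌊α * n⌋ : ℝ) * (2 / α)⌋ - (2 * (n : ℤ) - 2) = 0) := by
  have hα0 : (0:ℝ) < α := by linarith
  have hirr : Irrational (α * n) := hα.mul_natCast (by omega)
  set F := Int.fract (α * n) with hFdef
  have hFeq : F = α * n - ⌊α * n⌋ := rfl
  have hF0 : 0 < F := by
    rcases lt_or_eq_of_le (Int.fract_nonneg (α * n)) with h | h
    · exact h
    · exfalso
      have h' : α * n - ⌊α * n⌋ = 0 := by rw [Int.self_sub_floor]; exact h.symm
      exact hirr.ne_int ⌊α * n⌋ (by linarith)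
  have hF1 : F < 1 := Int.fract_lt_one _
  have hne : F ≠ α / 2 := by
    intro heq
    have hd : (2 * (n:ℝ) - 1) ≠ 0 := by
      have : (1:ℝ) ≤ n := by exact_mod_cast hn
      linarith
    set q : ℚ := ((2 * ⌊α * n⌋ : ℤ) : ℚ) / ((2 * n - 1 : ℤ) : ℚ) with hq
    have hrat : α = (q : ℝ) := by
      rw [hq]
      push_cast
      rw [hFeq] at heq
      field_simp
      linarith
    rw [hrat] at hα; exact Rat.not_irrational q hα
  have hmain : (⌊α * n⌋ : ℝ) * (2 / α) = -(2 * F / α) + ((2 * n : ℤ) : ℝ) := by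
    have : (⌊α * n⌋ : ℝ) = α * n - F := by rw [hFeq]; ring
    rw [this]
    field_simp
    push_cast
    ring
  constructor
  · intro hle
    have hlt : F < α / 2 := lt_of_le_of_ne hle hne
    have hfl : ⌊(⌊α * n⌋ : ℝ) * (2 / α)⌋ = -1 + 2 * n := by
      rw [hmain, Int.floor_add_intCast]
      have hneg : ⌊-(2 * F / α)⌋ = -1 := by
        rw [Int.floor_eq_iff]
        constructor
        · push_cast
          rw [neg_le_neg_iff, div_le_one hα0]
          linarith
        · push_cast
          have : 0 < 2 * F / α := by positivity
          linarith
      rw [hneg]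
    rw [hfl]; ring
  · intro hgt
    push_neg at hgt
    have hfl : ⌊(⌊α * n⌋ : ℝ) * (2 / α)⌋ = -2 + 2 * n := by
      rw [hmain, Int.floor_add_intCast]
      have hneg : ⌊-(2 * F / α)⌋ = -2 := by
        rw [Int.floor_eq_iff]
        constructor
        · push_cast
          rw [neg_le_neg_iff, div_le_iff₀ hα0]
          linarith
        · push_cast
          have : 1 < 2 * F / α := by rw [lt_div_iff₀ hα0]; linarith
          linarith
      rw [hneg]
    rw [hfl]; ring
end

section
/- Let α be irrational with 1 < α < 4/3 and let n be a positive integer with {αn} > α/2. Then ‖(4n − 4)·(α/4)‖ ≥ min(1/3, {α}). -/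
/-!
Writing `x = α n - α`: since `1 < α < 4/3` we have `{α} = α - 1 < α / 2 < {α n}`, so no carry
occurs and `{x} = {α n} - (α - 1)`. Then `{x} > 1 - α / 2 > 1/3` and `1 - {x} = α - {α n} ≥ {α}`,
while `‖x‖ = min ({x}, 1 - {x})`.
-/

/-- distance from a real number to the nearest integer -/
noncomputable def intDist (x : ℝ) : ℝ := ⨅ y : ℤ, |x - (y : ℝ)|

theorem Int.fract_sub_of_fract_le {R : Type*} [Ring R] [LinearOrder R] [IsStrictOrderedRing R]
    [FloorRing R] {a b : R} (h : Int.fract b ≤ Int.fract a) :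
    Int.fract (a - b) = Int.fract a - Int.fract b := by
  rw [Int.fract_eq_iff]
  refine ⟨sub_nonneg.mpr h, ?_, ⌊a⌋ - ⌊b⌋, ?_⟩
  · exact sub_lt_iff_lt_add.mpr
      ((Int.fract_lt_one a).trans_le (le_add_of_nonneg_right (Int.fract_nonneg b)))
  · rw [Int.cast_sub, Int.fract, Int.fract]
    abel

theorem intDist_eq_abs_sub_round (x : ℝ) : intDist x = |x - round x| :=
  le_antisymm (ciInf_le ⟨0, by rintro _ ⟨y, rfl⟩; exact abs_nonneg _⟩ (round x))
    (le_ciInf (round_le x))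

theorem le_intDist_iff {c x : ℝ} : c ≤ intDist x ↔ c ≤ Int.fract x ∧ c ≤ 1 - Int.fract x := by
  rw [intDist_eq_abs_sub_round, abs_sub_round_eq_min, le_min_iff]

theorem intDist_ge_of_fract_gt_general (α : ℝ) (h1 : 1 < α) (h2 : α < 4 / 3)
    (n : ℕ) (h : Int.fract (α * n) > α / 2) :
    intDist ((4 * (n : ℝ) - 4) * (α / 4)) ≥ min (1 / 3) (Int.fract α) := by
  have hfract_α : Int.fract α = α - 1 :=
    Int.fract_eq_iff.mpr ⟨by linarith, by linarith, 1, by push_cast; ring⟩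
  have hfract_x : Int.fract (α * n - α) = Int.fract (α * n) - (α - 1) := by
    rw [Int.fract_sub_of_fract_le (by linarith), hfract_α]
  have hlt_one := Int.fract_lt_one (α * n)
  rw [show (4 * (n : ℝ) - 4) * (α / 4) = α * n - α by ring, ge_iff_le, le_intDist_iff, hfract_x]
  exact ⟨(min_le_left _ _).trans (by linarith), (min_le_right _ _).trans (by linarith)⟩

theorem intDist_ge_of_fract_gt (α : ℝ) (hα : Irrational α) (h1 : 1 < α) (h2 : α < 4 / 3)
    (n : ℕ) (hn : 0 < n) (h : Int.fract (α * n) > α / 2) :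
    intDist ((4 * (n : ℝ) - 4) * (α / 4)) ≥ min (1 / 3) (Int.fract α) :=
  intDist_ge_of_fract_gt_general α h1 h2 n h
end

section
/- Let α = Σ_{j=1}^∞ 10^{−j!} (Liouville's constant) and let S_α = {n ∈ ℕ : 0 < {αn} < 1/n}. Then S_α contains arbitrarily long arithmetic progressions starting at 0; that is, for every positive integer l there exists n ∈ ℕ such that n, 2n, ..., ln all belong to S_α. -/
open Nat LiouvilleNumber Finset

/-- Liouville's constant -/
noncomputable def liouvilleConst : ℝ := ∑' j : ℕ, (10 : ℝ) ^ (-(((j + 1).factorial : ℕ) : ℤ))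

lemma liouvilleConst_eq : liouvilleConst = liouvilleNumber 10 - 1 / 10 := by
  have hs : Summable fun i : ℕ => 1 / (10:ℝ) ^ i ! := LiouvilleNumber.summable (by norm_num)
  have h0 : liouvilleNumber 10 = 1 / (10:ℝ) ^ (0:ℕ)! + ∑' j : ℕ, 1 / (10:ℝ) ^ (j+1)! := by
    rw [liouvilleNumber, Summable.tsum_eq_zero_add hs]
  have h1 : liouvilleConst = ∑' j : ℕ, 1 / (10:ℝ) ^ (j+1)! := by
    unfold liouvilleConst
    congr 1
    funext j
    rw [zpow_neg, zpow_natCast, one_div]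
  rw [h1, h0]
  norm_num

theorem liouville_set_contains_ap (l : ℕ) (hl : 0 < l) :
    ∃ n : ℕ, ∀ i : ℕ, 1 ≤ i → i ≤ l →
      0 < Int.fract (liouvilleConst * (i * n)) ∧
        Int.fract (liouvilleConst * (i * n)) < 1 / (i * n : ℝ) := by
  set k : ℕ := l + 2 with hk
  refine ⟨10 ^ k !, fun i hi1 hil => ?_⟩
  set n : ℕ := 10 ^ k ! with hn
  have hr_pos : 0 < remainder 10 k := remainder_pos (by norm_num) k
  have hr_lt : remainder 10 k < 1 / ((10:ℝ) ^ k !) ^ k := remainder_lt k (by norm_num)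
  have hin_pos : (0:ℝ) < (i:ℝ) * n := by
    have : 0 < i * n := Nat.mul_pos hi1 (pow_pos (by norm_num) _)
    exact_mod_cast this
  -- key integer
  have hfact : ∀ j ∈ range (k+1), (10:ℝ) ^ k ! * (1 / (10:ℝ) ^ j !) = ((10 ^ (k.factorial - j.factorial) : ℕ) : ℝ) := by
    intro j hj
    have hle : j ! ≤ k ! := Nat.factorial_le (Nat.lt_succ_iff.mp (mem_range.mp hj))
    have : (10:ℝ) ^ k ! = (10:ℝ) ^ (k.factorial - j.factorial) * 10 ^ j ! := by
      rw [← pow_add, Nat.sub_add_cancel hle]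
    rw [this]
    push_cast
    field_simp
  have hN : ∃ N : ℤ, ((i:ℝ) * n) * (partialSum 10 k - 1/10) = (N : ℝ) := by
    refine ⟨(i : ℤ) * (∑ j ∈ range (k+1), (10:ℤ) ^ (k.factorial - j.factorial)) - i * 10 ^ (k.factorial - 1), ?_⟩
    have hpart : (n:ℝ) * partialSum 10 k = ∑ j ∈ range (k+1), ((10 ^ (k.factorial - j.factorial) : ℕ) : ℝ) := by
      rw [partialSum, mul_sum]
      refine Finset.sum_congr rfl fun j hj => ?_
      have := hfact j hj
      rw [hn]
      push_cast
      push_cast at this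
      linarith [this]
    have hten : (n:ℝ) * (1/10) = ((10 ^ (k.factorial - 1) : ℕ) : ℝ) := by
      have h1 : (1:ℕ) ≤ k ! := Nat.one_le_iff_ne_zero.mpr (Nat.factorial_ne_zero k)
      have : (10:ℝ) ^ k ! = (10:ℝ) ^ (k.factorial - 1) * 10 ^ 1 := by
        rw [← pow_add, Nat.sub_add_cancel h1]
      rw [hn]
      push_cast
      rw [this]
      ring
    have : ((i:ℝ) * n) * (partialSum 10 k - 1/10)
        = (i:ℝ) * ((n:ℝ) * partialSum 10 k) - (i:ℝ) * ((n:ℝ) * (1/10)) := by ring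
    rw [this, hpart, hten]
    push_cast
    ring
  obtain ⟨N, hNeq⟩ := hN
  -- fract computation
  have hsplit : liouvilleConst * ((i:ℝ) * n) = (N:ℝ) + ((i:ℝ) * n) * remainder 10 k := by
    rw [liouvilleConst_eq, ← partialSum_add_remainder (by norm_num : (1:ℝ) < 10) k]
    rw [← hNeq]; ring
  -- main bound: (i*n)^2 * remainder < 1
  have hnat : l ^ 2 * (n^2) ≤ n ^ k := by
    have h2l : l ^ 2 < 10 ^ (2 * l) := by
      calc l ^ 2 < (2 ^ l) ^ 2 := by
            have := Nat.lt_two_pow_self (n := l)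
            exact Nat.pow_lt_pow_left this (by norm_num)
        _ ≤ (10 ^ l) ^ 2 := Nat.pow_le_pow_left (Nat.pow_le_pow_left (by norm_num) l) 2
        _ = 10 ^ (2 * l) := by rw [← pow_mul, mul_comm]
    have hkfac : 2 * l + 2 * k ! ≤ k * k ! := by
      have h1 : 2 * l ≤ l * k ! := by
        have : 2 ≤ k ! := by
          calc 2 = 2 ! := rfl
            _ ≤ k ! := Nat.factorial_le (by omega)
        calc 2 * l = l * 2 := mul_comm _ _
          _ ≤ l * k ! := Nat.mul_le_mul_left l this
      calc 2 * l + 2 * k ! ≤ l * k ! + 2 * k ! := by omega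
        _ = (l + 2) * k ! := by ring
        _ = k * k ! := by rw [hk]
    calc l ^ 2 * n ^ 2 = l ^ 2 * 10 ^ (2 * k !) := by
          rw [hn, ← pow_mul, mul_comm k ! 2]
      _ ≤ 10 ^ (2 * l) * 10 ^ (2 * k !) := Nat.mul_le_mul_right _ h2l.le
      _ = 10 ^ (2 * l + 2 * k !) := by rw [← pow_add]
      _ ≤ 10 ^ (k * k !) := Nat.pow_le_pow_right (by norm_num) hkfac
      _ = n ^ k := by rw [hn, ← pow_mul, mul_comm]
  have hkey : ((i:ℝ) * n) ^ 2 * remainder 10 k < 1 := by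
    have hnk : ((10:ℝ) ^ k !) ^ k = ((n ^ k : ℕ) : ℝ) := by rw [hn]; push_cast; ring
    have hle : ((i:ℝ) * n) ^ 2 ≤ ((l ^ 2 * n ^ 2 : ℕ) : ℝ) := by
      push_cast
      have hil' : (i:ℝ) ≤ l := by exact_mod_cast hil
      have hn0 : (0:ℝ) ≤ (n:ℝ) := Nat.cast_nonneg n
      have h2 : (i:ℝ) * i ≤ (l:ℝ) * l :=
        mul_le_mul hil' hil' (Nat.cast_nonneg i) (Nat.cast_nonneg l)
      nlinarith [mul_le_mul_of_nonneg_right h2 (mul_nonneg hn0 hn0)]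
    have hnk_pos : (0:ℝ) < ((n ^ k : ℕ) : ℝ) := by
      have : 0 < n ^ k := pow_pos (pow_pos (by norm_num) _) _
      exact_mod_cast this
    calc ((i:ℝ) * n) ^ 2 * remainder 10 k
        < ((n ^ k : ℕ) : ℝ) * (1 / ((10:ℝ) ^ k !) ^ k) := by
          apply mul_lt_mul' ?_ hr_lt hr_pos.le hnk_pos
          · exact hle.trans (by exact_mod_cast Nat.cast_le.mpr hnat)
      _ = 1 := by rw [hnk]; field_simp
  have hfr_lt1 : ((i:ℝ) * n) * remainder 10 k < 1 := by
    have h1le : (1:ℝ) ≤ (i:ℝ) * n := by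
      have : 1 ≤ i * n := Nat.one_le_iff_ne_zero.mpr (by positivity)
      exact_mod_cast this
    nlinarith
  have hfr : Int.fract (liouvilleConst * ((i:ℕ) * (n:ℕ) : ℝ)) = ((i:ℝ) * n) * remainder 10 k := by
    have : liouvilleConst * ((i:ℝ) * (n:ℝ)) = (N:ℝ) + ((i:ℝ) * n) * remainder 10 k := hsplit
    rw [this, Int.fract_intCast_add, Int.fract_eq_self.mpr ⟨by positivity, hfr_lt1⟩]
  constructor
  · rw [hfr]; positivity
  · rw [hfr]
    rw [lt_div_iff₀ hin_pos]
    nlinarith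
end

section
/- Let α be irrational with α > 1, and let c be a positive integer with c > α/(α − 1). Then for every positive integer n, ‖⌊⌊αn⌋·(c/α)⌋·(1/c)‖ ≥ 1/(2c); equivalently, the set {n ∈ ℕ : ‖⌊⌊αn⌋·(c/α)⌋/c‖ < 1/(2c)} is empty. -/
lemma intDist_ge_of_not_dvd (K : ℤ) (c : ℕ) (hc : 0 < c) (hd : ¬ ((c:ℤ) ∣ K)) :
    intDist ((K:ℝ)/c) ≥ 1/c := by
  have hcR : (0:ℝ) < c := by exact_mod_cast hc
  apply le_ciInf
  intro y
  have hne : K - c*y ≠ 0 := fun h => hd ⟨y, by omega⟩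
  have h1 : (1:ℤ) ≤ |K - c*y| := Int.one_le_abs hne
  have h1R : (1:ℝ) ≤ |(K:ℝ) - c*y| := by exact_mod_cast h1
  have heq : (K:ℝ)/c - y = ((K:ℝ) - c*y)/c := by field_simp
  rw [heq, abs_div, abs_of_pos hcR]
  gcongr

theorem no_recurrence_example (α : ℝ) (hα : Irrational α) (h1 : 1 < α)
    (c : ℕ) (hc : (c : ℝ) > α / (α - 1)) (n : ℕ) (hn : 0 < n) :
    intDist ((⌊(⌊α * n⌋ : ℝ) * (c / α)⌋ : ℝ) / c) ≥ 1 / (2 * c) := by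
  have hα1 : (0:ℝ) < α - 1 := by linarith
  have hαpos : (0:ℝ) < α := by linarith
  have hc1 : (1:ℝ) < c := by
    have : (1:ℝ) < α / (α - 1) := by rw [lt_div_iff₀ hα1]; linarith
    linarith
  have hcpos : (0:ℝ) < c := by linarith
  have hcn : 0 < c := by exact_mod_cast hcpos
  have hca : (c:ℝ) / α < (c:ℝ) - 1 := by
    have h2 : α < c * (α - 1) := (div_lt_iff₀ hα1).mp hc
    rw [div_lt_iff₀ hαpos]
    nlinarith
  set m : ℤ := ⌊α * n⌋ with hm
  have hirr : Irrational (α * n) := by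
    rcases Nat.eq_zero_or_pos n with h | h
    · omega
    · have := hα.natCast_mul (m := n) (by omega)
      simpa [mul_comm] using this
  have hmlt : (m:ℝ) < α * n := by
    rcases lt_or_eq_of_le (Int.floor_le (α * n)) with h | h
    · exact h
    · exact absurd h.symm (by simpa using hirr.ne_int m)
  have hmgt : α * n - 1 < (m:ℝ) := Int.sub_one_lt_floor _
  set K : ℤ := ⌊(m:ℝ) * (c / α)⌋ with hK
  have hKub : K < (c:ℤ) * n := by
    rw [hK, Int.floor_lt]
    push_cast
    calc (m:ℝ) * (c/α) < (α * n) * (c/α) := by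
          apply mul_lt_mul_of_pos_right hmlt
          positivity
      _ = c * n := by field_simp
  have hKlb : (c:ℤ) * n - c + 1 ≤ K := by
    rw [hK, Int.le_floor]
    push_cast
    have : (α * n - 1) * (c/α) ≤ (m:ℝ) * (c/α) := by
      apply mul_le_mul_of_nonneg_right hmgt.le
      positivity
    have heq : (α * n - 1) * (c/α) = c * n - c / α := by
      field_simp
    nlinarith
  have hnd : ¬ ((c:ℤ) ∣ K) := by
    rintro ⟨k, hk⟩
    have hcz : (0:ℤ) < c := by exact_mod_cast hcn
    have hck : (c:ℤ) * n - c + 1 ≤ c * k := hk ▸ hKlb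
    have hck2 : (c:ℤ) * k < c * n := hk ▸ hKub
    have h4 : k < (n:ℤ) := lt_of_mul_lt_mul_left hck2 hcz.le
    have h5 : (c:ℤ) * n < c * (k + 1) := by
      have hr : (c:ℤ) * (k + 1) = c * k + c := by ring
      linarith
    have h6 : (n:ℤ) < k + 1 := lt_of_mul_lt_mul_left h5 hcz.le
    omega
  have hge := intDist_ge_of_not_dvd K c hcn hnd
  have : 1 / (2 * (c:ℝ)) ≤ 1 / c := by
    apply div_le_div_of_nonneg_left (by norm_num) hcpos
    linarith
  linarith
end

section
/- Let α = √11 and β = 2. For every positive integer n, ⌊√11·n + 2⌋·(1/√11) is congruent modulo 1 to 2/√11 − {√11·n}/√11, and this value satisfies 1/√11 ≤ 2/√11 − {√11·n}/√11 < 2/√11; hence ‖⌊√11·n + 2⌋/√11‖ ≥ 1/√11. -/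
theorem sqrt11_example (n : ℕ) (hn : 0 < n) :
    (∃ m : ℤ, (⌊Real.sqrt 11 * n + 2⌋ : ℝ) * (1 / Real.sqrt 11)
        - (2 / Real.sqrt 11 - Int.fract (Real.sqrt 11 * n) / Real.sqrt 11) = (m : ℝ)) ∧
    1 / Real.sqrt 11 ≤ 2 / Real.sqrt 11 - Int.fract (Real.sqrt 11 * n) / Real.sqrt 11 ∧
    2 / Real.sqrt 11 - Int.fract (Real.sqrt 11 * n) / Real.sqrt 11 < 2 / Real.sqrt 11 ∧
    intDist ((⌊Real.sqrt 11 * n + 2⌋ : ℝ) / Real.sqrt 11) ≥ 1 / Real.sqrt 11 := by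
  have hs3 : (3:ℝ) ≤ Real.sqrt 11 := by
    have : (3:ℝ) = Real.sqrt 9 := by
      rw [show (9:ℝ) = 3^2 by norm_num, Real.sqrt_sq (by norm_num : (0:ℝ) ≤ 3)]
    rw [this]
    exact Real.sqrt_le_sqrt (by norm_num)
  have hs0 : (0:ℝ) < Real.sqrt 11 := by linarith
  set s := Real.sqrt 11
  set x := s * n with hx
  have hirr : Irrational s := by
    have h := (by norm_num : Nat.Prime 11).irrational_sqrt
    simpa using h
  have hxirr : Irrational x := by
    have := hirr.natCast_mul (m := n) (by omega)
    simpa [hx, mul_comm] using this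
  have hfract : 0 < Int.fract x := by
    rcases lt_or_eq_of_le (Int.fract_nonneg x) with h | h
    · exact h
    · exfalso
      have : x = ⌊x⌋ := by
        have := Int.fract_add_floor x
        rw [← h] at this; linarith [this]
      exact (hxirr.ne_int ⌊x⌋) this
  have hfract1 : Int.fract x < 1 := Int.fract_lt_one x
  have hfloor : (⌊x + 2⌋ : ℝ) = x - Int.fract x + 2 := by
    rw [show (2:ℝ) = ((2:ℤ):ℝ) by norm_num, Int.floor_add_intCast]
    push_cast
    linarith [Int.fract_add_floor (s * (n:ℝ))]
  have hxn : x / s = (n : ℝ) := by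
    rw [hx, mul_comm, mul_div_assoc, div_self (ne_of_gt hs0), mul_one]
  have hval : (⌊x + 2⌋ : ℝ) / s = (n : ℝ) + (2 - Int.fract x) / s := by
    rw [hfloor]
    field_simp
    linarith [Int.fract_add_floor (s * (n:ℝ))]
  refine ⟨⟨(n : ℤ), ?_⟩, ?_, ?_, ?_⟩
  · rw [mul_one_div, hval]
    push_cast
    ring
  · rw [div_sub_div_same]
    gcongr
    linarith
  · have : 0 < Int.fract x / s := div_pos hfract hs0
    linarith
  · unfold intDist
    apply le_ciInf
    intro y
    rw [hval]
    set c := (2 - Int.fract x) / s with hc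
    have hc1 : 1 / s ≤ c := by
      rw [hc, div_le_div_iff₀ hs0 hs0]
      nlinarith
    have hc2 : c ≤ 1 - 1 / s := by
      have h2s : (2:ℝ) / s ≤ 1 - 1 / s := by
        rw [div_le_iff₀ hs0]
        have : 1 / s ≤ 1 / 3 := by
          rw [div_le_div_iff₀ hs0 (by norm_num)]
          linarith
        nlinarith
      have : c ≤ 2 / s := by
        rw [hc, div_le_div_iff₀ hs0 hs0]
        nlinarith [hfract]
      linarith
    rcases le_or_gt (y : ℝ) (n : ℝ) with h | h
    · rw [abs_of_nonneg (by linarith [hc1, one_div_pos.mpr hs0])]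
      linarith
    · have hy : (n : ℝ) + 1 ≤ (y : ℝ) := by
        have : (n : ℤ) < y := by exact_mod_cast h
        exact_mod_cast this
      have h1s : 0 < 1 / s := one_div_pos.mpr hs0
      rw [abs_of_nonpos (by linarith)]
      linarith
end
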